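/- arXiv:0909.2725 — 2 statements merged into one kernel-verified Lean document; each statement's English description precedes it below -/
import Mathlib

section
/- Let S be a K3 surface, β ∈ Br(S) of order d with B-field lift B ∈ H^2(S,Q) (so dB ∈ H^2(S,Z)). Let Pic(S,B) ⊆ H^*(S,Z) = H^0 ⊕ H^2 ⊕ H^4 be the orthogonal complement of the twisted transcendental lattice T(S,B) with respect to the Mukai pairing. Then Pic(S,B) is generated by Pic(S) (embedded in degree 2), the vector (d, dB, 0), and the vector (0, 0, 1). -/
noncomputable section

/-- The complex bilinear pairing on `Fin n → ℂ` given by an integral Gram matrix `G`. -/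
def pC {n : ℕ} (G : Matrix (Fin n) (Fin n) ℤ) (x y : Fin n → ℂ) : ℂ :=
  ∑ i, ∑ j, x i * (G i j : ℂ) * y j

/-- Coercion of an integral class to a complex one. -/
def zc {n : ℕ} (x : Fin n → ℤ) : Fin n → ℂ := fun i => (x i : ℂ)
/-- Coercion of a rational class to a complex one. -/
def qc {n : ℕ} (x : Fin n → ℚ) : Fin n → ℂ := fun i => (x i : ℂ)

lemma pC_add_left {n : ℕ} (G : Matrix (Fin n) (Fin n) ℤ) (x y z : Fin n → ℂ) :
    pC G (x + y) z = pC G x z + pC G y z := by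
  simp [pC, add_mul, Finset.sum_add_distrib]

lemma pC_sub_left {n : ℕ} (G : Matrix (Fin n) (Fin n) ℤ) (x y z : Fin n → ℂ) :
    pC G (x - y) z = pC G x z - pC G y z := by
  simp [pC, sub_mul, Finset.sum_sub_distrib]

lemma pC_smul_left {n : ℕ} (G : Matrix (Fin n) (Fin n) ℤ) (m : ℂ) (x z : Fin n → ℂ) :
    pC G (m • x) z = m * pC G x z := by
  simp [pC, Finset.mul_sum, mul_assoc]

lemma pC_comm {n : ℕ} {G : Matrix (Fin n) (Fin n) ℤ} (h : G.IsSymm) (x y : Fin n → ℂ) :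
    pC G x y = pC G y x := by
  unfold pC
  rw [Finset.sum_comm]
  refine Finset.sum_congr rfl fun j _ => Finset.sum_congr rfl fun i _ => ?_
  rw [h.apply j i]
  ring

lemma zc_add {n : ℕ} (a b : Fin n → ℤ) : zc (a + b) = zc a + zc b := by
  funext i; simp [zc]

lemma zc_sub {n : ℕ} (a b : Fin n → ℤ) : zc (a - b) = zc a - zc b := by
  funext i; simp [zc]

lemma zc_zsmul {n : ℕ} (m : ℤ) (a : Fin n → ℤ) : zc (m • a) = (m : ℂ) • zc a := by
  funext i; simp [zc]

set_option maxHeartbeats 1000000 in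
/-- Let `S` be a K3 surface, with `H²(S,ℤ)` identified with `Fin n → ℤ`
via the (even, unimodular, symmetric) Gram matrix `G`, and `σ` a generator of
`H^{2,0}(S)` (so `σ·σ = 0`, `σ·σ̄ > 0`, `σ ≠ 0`).  Let `β ∈ Br(S)` be of order `d`
with B-field lift `B ∈ H²(S,ℚ)`, so that `dB = DB ∈ H²(S,ℤ)` and, for `0 < e < d`,
`eB` does not lie in `H²(S,ℤ) + Pic(S) ⊗ ℚ` (this expresses that `β` has order
exactly `d`, where `Pic(S) = σ^⊥ ∩ H²(S,ℤ)`).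

The twisted Picard lattice `Pic(S,B) = T(S,B)^⊥ ⊆ H^*(S,ℤ) = ℤ ⊕ H² ⊕ ℤ` is the set of
integral Mukai vectors `v = (r,c,s)` orthogonal, for the Mukai pairing
`⟨(r,c,s),(r',c',s')⟩ = c·c' - rs' - r's`, to the twisted period
`σ_B = (0, σ, σ·B)`; i.e. `c·σ - r(σ·B) = 0`.

**Claim:** `Pic(S,B)` is generated by `Pic(S)` (in degree 2), `(d, dB, 0)` and
`(0,0,1)`. -/
theorem twisted_picard_lattice_generators
    {n : ℕ} (G : Matrix (Fin n) (Fin n) ℤ)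
    (hGsymm : G.IsSymm) (hGeven : ∀ i, Even (G i i)) (hGuni : IsUnit G.det)
    (σ : Fin n → ℂ) (hσ0 : σ ≠ 0)
    (hσσ : pC G σ σ = 0)
    (hσpos : 0 < (pC G σ (fun i => (starRingEnd ℂ) (σ i))).re)
    (B : Fin n → ℚ) (d : ℕ) (hd : 0 < d)
    (DB : Fin n → ℤ) (hDB : ∀ i, (d : ℚ) * B i = (DB i : ℚ))
    (horder : ∀ e : ℕ, 0 < e → e < d →
      ¬ ∃ (z : Fin n → ℤ) (x : Fin n → ℚ),
          pC G (qc x) σ = 0 ∧ ∀ i, (e : ℚ) * B i = (z i : ℚ) + x i) :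
    {v : ℤ × (Fin n → ℤ) × ℤ |
        pC G (zc v.2.1) σ - (v.1 : ℂ) * pC G σ (qc B) = 0}
      = ↑(Submodule.span ℤ
          (((fun x : Fin n → ℤ => ((0 : ℤ), x, (0 : ℤ))) ''
              {x : Fin n → ℤ | pC G (zc x) σ = 0})
            ∪ {((d : ℤ), DB, (0 : ℤ)), ((0 : ℤ), (0 : Fin n → ℤ), (1 : ℤ))})) := by
  set P : ℂ := pC G σ (qc B) with hP
  have hPB : pC G (qc B) σ = P := pC_comm hGsymm _ _
  -- zc DB = d • qc B
  have hzcDB : zc DB = ((d : ℕ) : ℂ) • qc B := by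
    funext i
    have := hDB i
    simp only [zc, qc, Pi.smul_apply, smul_eq_mul]
    exact_mod_cast congrArg (fun q : ℚ => (q : ℂ)) this.symm
  have hDBσ : pC G (zc DB) σ = (d : ℂ) * P := by
    rw [hzcDB, pC_smul_left, hPB]
  ext v
  simp only [Set.mem_setOf_eq, SetLike.mem_coe]
  constructor
  · intro hv
    obtain ⟨r, c, s⟩ := v
    simp only at hv ⊢
    have hc : pC G (zc c) σ = (r : ℂ) * P := by linear_combination hv
    set q : ℤ := r / (d : ℤ) with hq
    set e : ℤ := r % (d : ℤ) with he
    have hdne : (d : ℤ) ≠ 0 := by exact_mod_cast hd.ne'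
    have he0 : 0 ≤ e := Int.emod_nonneg r hdne
    have hed : e < (d : ℤ) := Int.emod_lt_of_pos r (by exact_mod_cast hd)
    have req : (d : ℤ) * q + e = r := Int.mul_ediv_add_emod r d
    -- pairing of zc (c - q • DB) with σ
    have hz : pC G (zc (c - q • DB)) σ = (e : ℂ) * P := by
      rw [zc_sub, zc_zsmul, pC_sub_left, pC_smul_left, hc, hDBσ]
      have : ((d : ℤ) : ℂ) * (q : ℂ) + (e : ℂ) = (r : ℂ) := by exact_mod_cast congrArg (fun m : ℤ => (m : ℂ)) req
      push_cast at this ⊢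
      linear_combination -(P * this)
    have hezero : e = 0 := by
      by_contra hne
      have hepos : 0 < e := lt_of_le_of_ne he0 (Ne.symm hne)
      refine horder e.toNat (by omega) (by omega) ?_
      refine ⟨c - q • DB, fun i => (e : ℚ) * B i - ((c i - q * DB i : ℤ) : ℚ), ?_, ?_⟩
      · have hqcx : (qc (fun i => (e : ℚ) * B i - ((c i - q * DB i : ℤ) : ℚ)))
            = (e : ℂ) • qc B - zc (c - q • DB) := by
          funext i
          simp only [qc, zc, Pi.sub_apply, Pi.smul_apply, smul_eq_mul]
          push_cast
          ring
        rw [hqcx, pC_sub_left, pC_smul_left, hPB, hz]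
        ring
      · intro i
        have h1 : ((e.toNat : ℤ) : ℚ) = (e : ℚ) := by
          exact_mod_cast congrArg (fun m : ℤ => (m : ℚ)) (Int.toNat_of_nonneg he0)
        simp only [Pi.sub_apply, Pi.smul_apply, smul_eq_mul]
        push_cast at h1 ⊢
        rw [h1]
        ring
    -- now d ∣ r, write v as combination
    have hw : pC G (zc (c - q • DB)) σ = 0 := by rw [hz, hezero]; simp
    have hveq : ((r : ℤ), c, s)
        = q • (((d : ℕ) : ℤ), DB, (0 : ℤ)) + ((0 : ℤ), c - q • DB, (0 : ℤ))
          + s • ((0 : ℤ), (0 : Fin n → ℤ), (1 : ℤ)) := by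
      simp only [Prod.smul_mk, Prod.mk_add_mk, smul_eq_mul, mul_zero, smul_zero, mul_one]
      refine Prod.ext ?_ (Prod.ext ?_ ?_)
      · simp only [add_zero]
        rw [← req, hezero]
        ring
      · simp only
        abel
      · simp
    rw [hveq]
    refine Submodule.add_mem _ (Submodule.add_mem _ ?_ ?_) ?_
    · exact Submodule.smul_mem _ q (Submodule.subset_span (Or.inr (by simp)))
    · exact Submodule.subset_span (Or.inl ⟨c - q • DB, hw, rfl⟩)
    · exact Submodule.smul_mem _ s (Submodule.subset_span (Or.inr (by simp)))
  · intro hv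
    induction hv using Submodule.span_induction with
    | mem x hx => ?_
    | zero => ?_
    | add x y _ _ hx hy => ?_
    | smul m x _ hx => ?_
    · rcases hx with ⟨y, hy, rfl⟩ | hx
      · simpa using hy
      · rcases hx with rfl | hx
        · simp only
          rw [hDBσ]
          push_cast
          ring
        · simp only [Set.mem_singleton_iff] at hx
          subst hx
          simp [pC, zc]
    · simp [pC, zc]
    · simp only [Prod.fst_add, Prod.snd_add] at *
      rw [zc_add, pC_add_left]
      push_cast
      linear_combination hx + hy
    · simp only [Prod.smul_fst, Prod.smul_snd, smul_eq_mul] at *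
      rw [zc_zsmul, pC_smul_left]
      push_cast
      linear_combination (m : ℂ) * hx

end
end

section
/- Let A be an abelian category, Z : K(A) → C additive with values of nonzero objects in the semi-closed upper half-plane, and suppose E ∈ A satisfies Im(Z(E)) = m where m > 0 generates the image of Im ∘ Z (i.e. Im(Z(G)) ∈ mZ_{≥0} for all G ∈ A). If every subobject A ⊆ E with Im(Z(A)) = 0 is zero (i.e. E has no nonzero subobjects of phase 1), then E is Z-stable. -/
open CategoryTheory CategoryTheory.Limits

/-- An object `X ≠ 0` is `Z`-stable if every proper nonzero subobject has strictly
smaller phase; on the semi-closed upper half-plane the phase ordering agrees with the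
ordering of `Complex.arg ∈ (0, π]`. -/
def ZStable {C : Type*} [Category C] [Abelian C] (Z : C → ℂ) (X : C) : Prop :=
  ¬ IsZero X ∧
    ∀ A : Subobject X, A ≠ ⊥ → A ≠ ⊤ → (Z (A : C)).arg < (Z X).arg


lemma aux_ratio {m a b : ℝ} (hm : 0 < m) (hab : a < b)
    {S T : ℝ} (hS : 0 < S) (hT : 0 < T)
    (hS2 : S ^ 2 = b ^ 2 + m ^ 2) (hT2 : T ^ 2 = a ^ 2 + m ^ 2) :
    a * S < b * T := by
  rcases le_or_gt b 0 with hb | hb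
  · have ha : a < 0 := lt_of_lt_of_le hab hb
    have hb2 : b ^ 2 < a ^ 2 := by
      nlinarith [mul_pos_of_neg_of_neg (show a - b < 0 by linarith) (show a + b < 0 by linarith)]
    have hsq : (b * T) ^ 2 < (a * S) ^ 2 := by
      nlinarith [mul_lt_mul_of_pos_right hb2 (pow_pos hm 2)]
    by_contra hcon
    push_neg at hcon
    have h1 : a * S < 0 := mul_neg_of_neg_of_pos ha hS
    nlinarith [mul_self_le_mul_self (by linarith : (0:ℝ) ≤ -(a*S)) (by linarith : -(a*S) ≤ -(b*T))]
  · rcases le_or_gt a 0 with ha | ha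
    · calc a * S ≤ 0 := mul_nonpos_of_nonpos_of_nonneg ha hS.le
        _ < b * T := mul_pos hb hT
    · have ha2 : a ^ 2 < b ^ 2 := by nlinarith
      have hsq : (a * S) ^ 2 < (b * T) ^ 2 := by
        nlinarith [mul_lt_mul_of_pos_right ha2 (pow_pos hm 2)]
      by_contra hcon
      push_neg at hcon
      have h1 : 0 < b * T := mul_pos hb hT
      nlinarith [mul_self_le_mul_self h1.le hcon]
lemma aux_arg {z w : ℂ} (hz : 0 < z.im) (him : z.im = w.im) (hre : w.re < z.re) :
    z.arg < w.arg := by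
  have hw : 0 < w.im := him ▸ hz
  have hz0 : z ≠ 0 := fun h => by simp [h] at hz
  have hw0 : w ≠ 0 := fun h => by simp [h] at hw
  have hzabs : 0 < ‖z‖ := norm_pos_iff.mpr hz0
  have hwabs : 0 < ‖w‖ := norm_pos_iff.mpr hw0
  rw [Complex.arg_of_im_pos hz, Complex.arg_of_im_pos hw]
  have hmem : ∀ u : ℂ, u ≠ 0 → u.re / ‖u‖ ∈ Set.Icc (-1:ℝ) 1 := by
    intro u hu
    constructor
    · rw [le_div_iff₀ (norm_pos_iff.mpr hu)]
      nlinarith [Complex.abs_re_le_norm u, abs_le.mp (le_refl |u.re|), neg_abs_le u.re]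
    · rw [div_le_one (norm_pos_iff.mpr hu)]
      exact le_trans (le_abs_self _) (Complex.abs_re_le_norm u)
  apply Real.strictAntiOn_arccos (hmem w hw0) (hmem z hz0)
  rw [div_lt_div_iff₀ hwabs hzabs]
  exact aux_ratio hz hre hzabs hwabs
    (by rw [Complex.sq_norm, Complex.normSq_apply]; ring)
    (by rw [Complex.sq_norm, Complex.normSq_apply, ← him]; ring)

theorem minimal_imaginary_part_is_stable'
    {C : Type*} [Category C] [Abelian C]
    (Z : C → ℂ)
    (hadd : ∀ S : ShortComplex C, S.ShortExact → Z S.X₂ = Z S.X₁ + Z S.X₃)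
    (hupper : ∀ X : C, ¬ IsZero X →
      0 < (Z X).im ∨ ((Z X).im = 0 ∧ (Z X).re < 0))
    (m : ℝ) (hm : 0 < m)
    (hint : ∀ X : C, ∃ k : ℕ, (Z X).im = (k : ℝ) * m)
    (E : C) (hE : ¬ IsZero E)
    (hImE : (Z E).im = m)
    (hvals : ∀ A : Subobject E, (Z (A : C)).im = 0 ∨ (Z (A : C)).im = m)
    (hzero : ∀ A : Subobject E, (Z (A : C)).im = 0 → A = ⊥) :
    (¬ IsZero E ∧
    ∀ A : Subobject E, A ≠ ⊥ → A ≠ ⊤ → (Z (A : C)).arg < (Z E).arg) := by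
  refine ⟨hE, fun A hbot htop => ?_⟩
  have hImA : (Z (A : C)).im = m := (hvals A).resolve_left (fun h => hbot (hzero A h))
  set B := cokernel A.arrow with hB
  have hSE : (ShortComplex.mk A.arrow (cokernel.π A.arrow)
      (cokernel.condition _)).ShortExact :=
    { exact := ShortComplex.exact_cokernel A.arrow }
  have hZ : Z E = Z (A : C) + Z B := hadd _ hSE
  have hBnz : ¬ IsZero B := by
    intro h
    apply htop
    have hπ : cokernel.π A.arrow = 0 := h.eq_zero_of_tgt _
    have : Epi A.arrow := Abelian.epi_of_cokernel_π_eq_zero _ hπ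
    have : IsIso A.arrow := isIso_of_mono_of_epi _
    exact Subobject.eq_top_of_isIso_arrow A
  have hImB : (Z B).im = 0 := by
    have := congrArg Complex.im hZ
    simp only [Complex.add_im] at this
    rw [hImE, hImA] at this
    linarith
  have hReB : (Z B).re < 0 := by
    rcases hupper B hBnz with h | h
    · rw [hImB] at h; linarith
    · exact h.2
  have hre : (Z E).re < (Z (A : C)).re := by
    have := congrArg Complex.re hZ
    simp only [Complex.add_re] at this
    linarith
  exact aux_arg (by rw [hImA]; exact hm) (by rw [hImA, hImE]) hre

/-- Let `A` be an abelian category, `Z : K(A) → ℂ` additive with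
nonzero objects mapped into the semi-closed upper half-plane, and `E ∈ A` a nonzero
object with `Im(Z(E)) = m`, where `m > 0` generates the image of `Im ∘ Z` (i.e.
`Im(Z(G)) ∈ m·ℤ_{≥0}` for all `G`).  If every subobject `A ⊆ E` has
`Im(Z(A)) ∈ {0, m}`, and every subobject with `Im(Z(A)) = 0` is zero, then `E` is
`Z`-stable: a destabilizing subobject `A` would have `Im(Z(A)) = m`, so the quotient
`B = E/A` has `Im(Z(B)) = 0`, hence phase `1 ≥ phase(E)`, and `A` does not
destabilize. -/
theorem minimal_imaginary_part_is_stable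
    {C : Type*} [Category C] [Abelian C]
    (Z : C → ℂ)
    (hadd : ∀ S : ShortComplex C, S.ShortExact → Z S.X₂ = Z S.X₁ + Z S.X₃)
    (hupper : ∀ X : C, ¬ IsZero X →
      0 < (Z X).im ∨ ((Z X).im = 0 ∧ (Z X).re < 0))
    (m : ℝ) (hm : 0 < m)
    (hint : ∀ X : C, ∃ k : ℕ, (Z X).im = (k : ℝ) * m)
    (E : C) (hE : ¬ IsZero E)
    (hImE : (Z E).im = m)
    (hvals : ∀ A : Subobject E, (Z (A : C)).im = 0 ∨ (Z (A : C)).im = m)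
    (hzero : ∀ A : Subobject E, (Z (A : C)).im = 0 → A = ⊥) :
    ZStable Z E := by
  exact minimal_imaginary_part_is_stable' Z hadd hupper m hm hint E hE hImE hvals hzero
end
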